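/- Let x_{n,k} = 2^{-2^n} + k·4^{-2^n} and X = {0} ∪ ⋃_{n=1}^∞ ⋃_{k=0}^{n-1} {x_{n,k}} ⊂ ℝ. Then the Assouad dimension of the compact set X equals 1. -/
import Mathlib


open MeasureTheory Metric Set
open scoped NNReal ENNReal

/-- The Assouad dimension of a set `F ⊆ ℝ`:
`inf {s > 0 : ∃ C > 0, ∀ x ∈ F, ∀ 0 < r < R, N_r(B(x,R) ∩ F) ≤ C (R/r)^s}`, where
`N_r(E)` is the least number of open balls of diameter `r` (radius `r/2`) covering `E`. -/
noncomputable def assouadDimSet (F : Set ℝ) : ℝ≥0∞ :=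
  sInf (ENNReal.ofReal '' {s : ℝ | 0 < s ∧ ∃ C : ℝ, 0 < C ∧ ∀ x ∈ F, ∀ r R : ℝ, 0 < r → r < R →
    ∃ t : Finset ℝ, (t.card : ℝ) ≤ C * (R / r) ^ s ∧
      closedBall x R ∩ F ⊆ ⋃ y ∈ t, ball y (r / 2)})

/-- The points `x_{n,k} = 2^{-2^n} + k·4^{-2^n}`. -/
noncomputable def xnk (n k : ℕ) : ℝ := (2 : ℝ)⁻¹ ^ (2 ^ n) + k * (4 : ℝ)⁻¹ ^ (2 ^ n)

/-- The set `X = {0} ∪ ⋃_{n=1}^∞ ⋃_{k=0}^{n-1} {x_{n,k}}`. -/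
def XLR : Set ℝ := {0} ∪ {y : ℝ | ∃ n : ℕ, 1 ≤ n ∧ ∃ k : ℕ, k < n ∧ y = xnk n k}

/-- Upper bound: since `X ⊆ ℝ`, the exponent `s = 1` always works with `C = 6`. -/
lemma XLR_upper : ∀ x ∈ XLR, ∀ r R : ℝ, 0 < r → r < R →
    ∃ t : Finset ℝ, (t.card : ℝ) ≤ 6 * (R / r) ^ (1:ℝ) ∧
      closedBall x R ∩ XLR ⊆ ⋃ y ∈ t, ball y (r / 2) := by
  intro x _ r R hr hrR
  have hR : 0 < R := hr.trans hrR
  set N : ℕ := ⌈4 * R / r⌉₊ with hN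
  refine ⟨(Finset.range (N+1)).image (fun i : ℕ => x - R + (i:ℝ) * (r/2)), ?_, ?_⟩
  · have hc : ((Finset.range (N+1)).image (fun i : ℕ => x - R + (i:ℝ) * (r/2))).card ≤ N + 1 :=
      Finset.card_image_le.trans_eq (Finset.card_range _)
    have h1 : 1 < R / r := (one_lt_div hr).2 hrR
    have h2 : (N : ℝ) < 4 * R / r + 1 := Nat.ceil_lt_add_one (by positivity)
    have h3 : 4 * R / r = 4 * (R / r) := by ring
    calc (((Finset.range (N+1)).image (fun i : ℕ => x - R + (i:ℝ) * (r/2))).card : ℝ)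
        ≤ ((N + 1 : ℕ) : ℝ) := by exact_mod_cast hc
      _ ≤ 6 * (R / r) ^ (1:ℝ) := by
          rw [Real.rpow_one]; push_cast; rw [h3] at h2; linarith
  · rintro p ⟨hp, -⟩
    rw [mem_closedBall, Real.dist_eq, abs_sub_le_iff] at hp
    obtain ⟨hp1, hp2⟩ := hp
    set q : ℝ := p - (x - R) with hq
    have hq0 : 0 ≤ q := by simp only [hq]; linarith
    have hq2 : q ≤ 2 * R := by simp only [hq]; linarith
    set i : ℕ := ⌊q / (r/2)⌋₊ with hi
    have hr2 : (0:ℝ) < r / 2 := by linarith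
    have hiN : i ≤ N := by
      have h1 : (i:ℝ) ≤ q / (r/2) := Nat.floor_le (by positivity)
      have h2 : q / (r/2) ≤ 4 * R / r := by
        rw [div_le_div_iff₀ hr2 hr]; nlinarith
      have h3 : (4 * R / r : ℝ) ≤ N := Nat.le_ceil _
      exact_mod_cast h1.trans (h2.trans h3)
    have h4 : (i:ℝ) * (r/2) ≤ q := by
      have h := Nat.floor_le (show (0:ℝ) ≤ q / (r/2) by positivity)
      rw [← hi] at h
      calc (i:ℝ) * (r/2) ≤ (q / (r/2)) * (r/2) := mul_le_mul_of_nonneg_right h hr2.le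
        _ = q := div_mul_cancel₀ _ (by positivity)
    have h5 : q < (i:ℝ) * (r/2) + r/2 := by
      have h := Nat.lt_floor_add_one (q / (r/2))
      have : q / (r/2) * (r/2) < ((i:ℝ) + 1) * (r/2) := by
        apply mul_lt_mul_of_pos_right _ hr2
        exact_mod_cast h
      rw [div_mul_cancel₀ _ (by positivity : (r/2:ℝ) ≠ 0)] at this
      linarith
    refine mem_iUnion₂.2 ⟨x - R + i * (r/2),
      Finset.mem_image.2 ⟨i, Finset.mem_range.2 (Nat.lt_succ_of_le hiN), rfl⟩, ?_⟩
    rw [mem_ball, Real.dist_eq, abs_lt]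
    constructor
    · simp only [hq] at h4 h5 ⊢; linarith
    · simp only [hq] at h4 h5 ⊢; linarith

/-- Lower bound: any admissible exponent `s` satisfies `1 ≤ s`, using the `n` points
`x_{n,k}` (`k < n`) which are `4^{-2^n}`-separated inside a ball of radius `n·4^{-2^n}`. -/
lemma XLR_lower (s : ℝ) (hs : 0 < s) (C : ℝ) (hC : 0 < C)
    (H : ∀ x ∈ XLR, ∀ r R : ℝ, 0 < r → r < R →
      ∃ t : Finset ℝ, (t.card : ℝ) ≤ C * (R / r) ^ s ∧
        closedBall x R ∩ XLR ⊆ ⋃ y ∈ t, ball y (r / 2)) : 1 ≤ s := by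
  by_contra hs1
  push_neg at hs1
  have h1s : 0 < 1 - s := by linarith
  have ht : Filter.Tendsto (fun n : ℕ => (n:ℝ) ^ (1 - s)) Filter.atTop Filter.atTop :=
    (tendsto_rpow_atTop h1s).comp tendsto_natCast_atTop_atTop
  obtain ⟨n, hn2, hnC⟩ := ((Filter.eventually_ge_atTop 2).and (ht.eventually_gt_atTop C)).exists
  set r : ℝ := (4:ℝ)⁻¹ ^ (2^n) with hrdef
  have hr : 0 < r := by positivity
  have hn1 : 1 ≤ n := by omega
  have hn1' : (1:ℝ) < n := by exact_mod_cast (by omega : 1 < n)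
  have hx : xnk n 0 ∈ XLR := Or.inr ⟨n, hn1, 0, by omega, rfl⟩
  obtain ⟨t, hcard, hcov⟩ := H (xnk n 0) hx r (n * r) hr (by nlinarith)
  have hmem : ∀ k, k < n → xnk n k ∈ closedBall (xnk n 0) (n * r) ∩ XLR := by
    intro k hk
    constructor
    · rw [mem_closedBall, Real.dist_eq]
      have he : xnk n k - xnk n 0 = (k:ℝ) * r := by simp [xnk, hrdef]
      rw [he, abs_of_nonneg (by positivity)]
      have : (k:ℝ) ≤ n := by exact_mod_cast hk.le
      nlinarith
    · exact Or.inr ⟨n, hn1, k, hk, rfl⟩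
  have hch : ∀ k ∈ Finset.range n, ∃ y, y ∈ t ∧ xnk n k ∈ ball y (r/2) := by
    intro k hk
    have h := hcov (hmem k (Finset.mem_range.1 hk))
    simpa using mem_iUnion₂.1 h
  choose! f hf1 hf2 using hch
  have hle : n ≤ t.card := by
    have := Finset.card_le_card_of_injOn f (fun k hk => hf1 k hk) ?_
    · simpa using this
    · intro k hk j hj hfe
      by_contra hne
      have hk' := hf2 k (by simpa using hk)
      have hj' := hf2 j (by simpa using hj)
      rw [hfe] at hk'
      have hd : dist (xnk n k) (xnk n j) < r := by
        calc dist (xnk n k) (xnk n j) ≤ dist (xnk n k) (f j) + dist (xnk n j) (f j) :=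
              dist_triangle_right _ _ _
          _ < r/2 + r/2 := by
              exact add_lt_add (mem_ball.1 hk') (mem_ball.1 hj')
          _ = r := by ring
      have he : xnk n k - xnk n j = ((k:ℝ) - j) * r := by simp [xnk, hrdef]; ring
      have h1 : (1:ℝ) ≤ |(k:ℝ) - (j:ℝ)| := by
        have hz : ((k:ℤ) - (j:ℤ)) ≠ 0 := by omega
        exact_mod_cast Int.one_le_abs hz
      have h2 : r ≤ dist (xnk n k) (xnk n j) := by
        rw [Real.dist_eq, he, abs_mul, abs_of_pos hr]
        nlinarith [mul_le_mul_of_nonneg_right h1 hr.le]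
      linarith
  have hRr : ((n:ℝ) * r) / r = n := by field_simp
  rw [hRr] at hcard
  have hn0 : (0:ℝ) < n := by linarith
  have hub : C * (n:ℝ) ^ s < n := by
    have h := mul_lt_mul_of_pos_right hnC (Real.rpow_pos_of_pos hn0 s)
    rw [← Real.rpow_add hn0] at h
    have he : (1 - s) + s = 1 := by ring
    rw [he, Real.rpow_one] at h
    exact h
  have hfin : (n:ℝ) ≤ C * (n:ℝ) ^ s := le_trans (by exact_mod_cast hle) hcard
  linarith

/-- The Assouad dimension of the compact set `X` equals `1`. -/
theorem assouadDimSet_XLR : assouadDimSet XLR = 1 := by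
  unfold assouadDimSet
  apply le_antisymm
  · refine sInf_le ⟨1, ⟨one_pos, 6, by norm_num, XLR_upper⟩, by simp⟩
  · refine le_sInf ?_
    rintro b ⟨s, ⟨hs, C, hC, H⟩, rfl⟩
    have h := XLR_lower s hs C hC H
    calc (1:ℝ≥0∞) = ENNReal.ofReal 1 := by simp
      _ ≤ ENNReal.ofReal s := ENNReal.ofReal_le_ofReal h
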